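/- Let φ be a singular-expansive flow on a compact metric space X. Then φ is expansive on every nonsingular compact invariant subset of X; that is, if Λ ⊆ X is compact, invariant, and Λ ∩ Sing(φ) = ∅, then φ is expansive on Λ. -/

import Mathlib

open Set Metric Filter
open scoped Classical

variable {X : Type*}

/-- A (continuous) flow on a topological space, given as a map `φ : ℝ → X → X`. -/
def IsFlowMap [TopologicalSpace X] (φ : ℝ → X → X) : Prop :=
  Continuous (fun p : ℝ × X => φ p.1 p.2) ∧ (∀ x : X, φ 0 x = x) ∧
    ∀ t s : ℝ, ∀ x : X, φ (t + s) x = φ t (φ s x)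

/-- The singular set of a flow. -/
def SingSet (φ : ℝ → X → X) : Set X := {x : X | ∀ t : ℝ, φ t x = x}

/-- An increasing homeomorphism of `ℝ`: a strictly increasing continuous bijection. -/
def IncreasingHomeo (s : ℝ → ℝ) : Prop :=
  Continuous s ∧ StrictMono s ∧ Function.Bijective s

/-- Distance from a point to a set, with the convention that the distance
to the empty set is the diameter of the whole space. -/
noncomputable def distToSet [MetricSpace X] (z : X) (A : Set X) : ℝ :=
  if A = ∅ then Metric.diam (Set.univ : Set X) else Metric.infDist z A

/-- The orbit of a point under a flow. -/
def flowOrbit (φ : ℝ → X → X) (x : X) : Set X := Set.range fun t : ℝ => φ t x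

/-- Bowen–Walters expansivity of a flow on a subset `Λ`. -/
def ExpansiveOn [MetricSpace X] (φ : ℝ → X → X) (Λ : Set X) : Prop :=
  ∀ ε > (0:ℝ), ∃ δ > (0:ℝ), ∀ x ∈ Λ, ∀ y ∈ Λ, ∀ s : ℝ → ℝ, Continuous s → s 0 = 0 →
    (∀ t : ℝ, dist (φ t x) (φ (s t) y) ≤ δ) →
    ∃ τ ∈ Set.Icc (-ε) ε, y = φ τ x

/-- Komuro k*-expansivity of a flow on a subset `Λ`. -/
def KStarExpansiveOn [MetricSpace X] (φ : ℝ → X → X) (Λ : Set X) : Prop :=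
  ∀ ε > (0:ℝ), ∃ δ > (0:ℝ), ∀ x ∈ Λ, ∀ y ∈ Λ, ∀ s : ℝ → ℝ,
    IncreasingHomeo s → s 0 = 0 →
    (∀ t : ℝ, dist (φ t x) (φ (s t) y) ≤ δ) →
    ∃ t₀ : ℝ, ∃ τ ∈ Set.Icc (t₀ - ε) (t₀ + ε), φ (s t₀) y = φ τ x

/-- Singular expansivity of a flow on a subset `Λ`. -/
def SingularExpansiveOn [MetricSpace X] (φ : ℝ → X → X) (Λ : Set X) : Prop :=
  ∀ ε > (0:ℝ), ∃ δ > (0:ℝ), ∀ x ∈ Λ, ∀ y ∈ Λ, ∀ s : ℝ → ℝ, IncreasingHomeo s →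
    (∀ t : ℝ, dist (φ t x) (φ (s t) y) ≤ δ * distToSet (φ t x) (SingSet φ)) →
    ∃ t₀ : ℝ, ∃ τ ∈ Set.Icc (t₀ - ε) (t₀ + ε), φ (s t₀) y = φ τ x

/-- A periodic point of a flow: a nonsingular point with a positive period. -/
def IsPeriodicPoint (φ : ℝ → X → X) (x : X) : Prop :=
  x ∉ SingSet φ ∧ ∃ t : ℝ, 0 < t ∧ φ t x = x

/-- An invariant set `K` is dynamically isolated if it has a neighborhood `U`
with `K = ⋂_{t ∈ ℝ} φ_t(U)`. -/
def DynIsolated [TopologicalSpace X] (φ : ℝ → X → X) (K : Set X) : Prop :=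
  ∃ U : Set X, K ⊆ interior U ∧ K = ⋂ t : ℝ, φ t '' U

/-- Equicontinuity of a flow. -/
def EquicontinuousFlow [MetricSpace X] (φ : ℝ → X → X) : Prop :=
  ∀ ε > (0:ℝ), ∃ δ > (0:ℝ), ∀ x y : X, dist x y ≤ δ →
    ∀ t : ℝ, dist (φ t x) (φ t y) ≤ ε

/-- Singular equicontinuity of a flow. -/
def SingularEquicontinuous [MetricSpace X] (φ : ℝ → X → X) : Prop :=
  ∀ ε > (0:ℝ), ∃ δ > (0:ℝ), ∀ x y : X, dist x y ≤ δ * distToSet x (SingSet φ) →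
    ∀ t : ℝ, dist (φ t x) (φ t y) ≤ ε

/-!
Compactness of `Λ` and its disjointness from `Sing(φ)` give uniform constants: no point of `Λ` has
a period in `(0, e]`, `Λ` stays at distance at least `c` from `Sing(φ)`, and for each `T > 0` the
maps `φ_ρ` with `T ≤ |ρ| ≤ e` displace every point of `Λ` by at least some `r > 0`. If the orbit
of `y` follows that of `x` within `δ ≪ r` under a continuous time change `s`, this displacement gap
keeps `s (t + ρ) - s t - ρ` from crossing `[T, e]`, so `s` is a coarse translation. Its sliding
average is then an increasing homeomorphism along which `y` still follows `x` within
`δ₀ c ≤ δ₀ · dist(·, Sing(φ))`, where `δ₀` is the singular-expansivity constant for `e / 2`; so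
`y = φ_σ x`, and `s` is `e`-close to the translation by `-σ` at one time. The same gap argument
propagates this closeness along `ℝ`; at `t = 0` it gives `|σ| < T ≤ ε`.
-/

open scoped Topology

theorem IsPreconnected.abs_lt_of_forall_abs_notMem_Icc {I : Set ℝ} (hI : IsPreconnected I)
    {g : ℝ → ℝ} (hg : ContinuousOn g I) {T e : ℝ} (hTe : T < e)
    (hgap : ∀ t ∈ I, |g t| ∉ Icc T e) {t₁ t : ℝ} (ht₁ : t₁ ∈ I) (ht : t ∈ I) (h₁ : |g t₁| < T) :
    |g t| < T := by
  by_contra! hT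
  have he : e < |g t| := by
    by_contra! he
    exact hgap t ht ⟨hT, he⟩
  obtain ⟨w, hw, hgw⟩ := hI.intermediate_value ht₁ ht hg.abs
    (show (T + e) / 2 ∈ Icc |g t₁| |g t| from ⟨by linarith, by linarith⟩)
  simp only at hgw
  exact hgap w hw ⟨by linarith, by linarith⟩

noncomputable def slidingAverage (s : ℝ → ℝ) (L u : ℝ) : ℝ := (∫ w in u..u + L, s w) / L

theorem hasDerivAt_slidingAverage {s : ℝ → ℝ} (hs : Continuous s) (L u : ℝ) :
    HasDerivAt (slidingAverage s L) ((s (u + L) - s u) / L) u := by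
  have hsplit : slidingAverage s L = fun u => ((∫ w in 0..u + L, s w) - ∫ w in 0..u, s w) / L := by
    ext u
    rw [slidingAverage, intervalIntegral.integral_interval_sub_left (hs.intervalIntegrable _ _)
      (hs.intervalIntegrable _ _)]
  rw [hsplit]
  refine HasDerivAt.div_const (HasDerivAt.sub ?_ (hs.integral_hasStrictDerivAt 0 u).hasDerivAt) L
  simpa using (hs.integral_hasStrictDerivAt 0 (u + L)).hasDerivAt.comp_add_const u L

theorem abs_slidingAverage_sub_le {s : ℝ → ℝ} (hs : Continuous s) {L C u : ℝ} (hL : 0 < L)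
    (hC : ∀ w ∈ Icc u (u + L), |s w - s u| ≤ C) : |slidingAverage s L u - s u| ≤ C := by
  have hint : (∫ w in u..u + L, s w) - L * s u = ∫ w in u..u + L, (s w - s u) := by
    rw [intervalIntegral.integral_sub (hs.intervalIntegrable _ _) intervalIntegrable_const,
      intervalIntegral.integral_const, add_sub_cancel_left, smul_eq_mul]
  have hbound : |∫ w in u..u + L, (s w - s u)| ≤ C * L := by
    have hΙ : uIoc u (u + L) ⊆ Icc u (u + L) := by
      rw [uIoc_of_le (by linarith)]
      exact Ioc_subset_Icc_self
    simpa [abs_of_pos hL] using intervalIntegral.norm_integral_le_of_norm_le_const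
      (f := fun w => s w - s u) fun w hw => hC w (hΙ hw)
  rw [slidingAverage, div_sub' hL.ne', abs_div, abs_of_pos hL, div_le_iff₀ hL, hint]
  exact hbound

theorem add_nat_mul_le_apply_add_nat_mul {s : ℝ → ℝ} {a L : ℝ} (h : ∀ t, s t + a ≤ s (t + L))
    (t : ℝ) (n : ℕ) : s t + n * a ≤ s (t + n * L) := by
  induction n with
  | zero => simp
  | succ n ih =>
    have := h (t + n * L)
    rw [add_assoc, ← add_one_mul] at this
    push_cast
    linarith

theorem exists_increasingHomeo_abs_sub_le {s : ℝ → ℝ} (hs : Continuous s) {L K : ℝ}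
    (hK : 0 ≤ K) (hKL : K < L) (hnear : ∀ t, ∀ ρ ∈ Icc 0 L, |s (t + ρ) - (s t + ρ)| ≤ K) :
    ∃ q, IncreasingHomeo q ∧ ∀ u, |q u - s u| ≤ L + K := by
  have hL : 0 < L := hK.trans_lt hKL
  have hstep : ∀ t, s t + (L - K) ≤ s (t + L) := fun t => by
    linarith [(abs_le.1 (hnear t L ⟨hL.le, le_rfl⟩)).1]
  have hclose : ∀ u, |slidingAverage s L u - s u| ≤ L + K := fun u =>
    abs_slidingAverage_sub_le hs hL fun w hw => by
      have h := abs_le.1 (hnear u (w - u) ⟨by linarith [hw.1], by linarith [hw.2]⟩)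
      rw [add_sub_cancel] at h
      exact abs_le.2 ⟨by linarith [hw.1], by linarith [hw.2]⟩
  have hmono : StrictMono (slidingAverage s L) := strictMono_of_deriv_pos fun u => by
    rw [(hasDerivAt_slidingAverage hs L u).deriv]
    exact div_pos (by linarith [hstep u]) hL
  have hcont : Continuous (slidingAverage s L) := continuous_iff_continuousAt.2 fun u =>
    (hasDerivAt_slidingAverage hs L u).continuousAt
  have hstairs := add_nat_mul_le_apply_add_nat_mul hstep
  have htop : ∀ b, ∃ u, b ≤ slidingAverage s L u := fun b => by
    obtain ⟨n, hn⟩ := exists_nat_ge ((b - s 0 + (L + K)) / (L - K))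
    refine ⟨n * L, ?_⟩
    have := hstairs 0 n
    rw [zero_add] at this
    rw [div_le_iff₀ (by linarith)] at hn
    linarith [(abs_le.1 (hclose (n * L))).1]
  have hbot : ∀ b, ∃ u, slidingAverage s L u ≤ b := fun b => by
    obtain ⟨n, hn⟩ := exists_nat_ge ((s 0 + (L + K) - b) / (L - K))
    refine ⟨-(n * L), ?_⟩
    have := hstairs (-(n * L)) n
    rw [neg_add_cancel] at this
    rw [div_le_iff₀ (by linarith)] at hn
    linarith [(abs_le.1 (hclose (-(n * L)))).2]
  exact ⟨_, ⟨hcont, hmono, hmono.injective, hcont.surjective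
    (tendsto_atTop_atTop_of_monotone hmono.monotone htop)
    (tendsto_atBot_atBot_of_monotone hmono.monotone hbot)⟩, hclose⟩

theorem continuous_distToSet [MetricSpace X] (A : Set X) : Continuous fun z => distToSet z A := by
  unfold distToSet
  split_ifs
  exacts [continuous_const, continuous_infDist_pt A]

namespace IsFlowMap

variable {φ : ℝ → X → X}

section Topological

variable [TopologicalSpace X]

theorem apply_apply (hφ : IsFlowMap φ) (a b : ℝ) (z : X) : φ a (φ b z) = φ (a + b) z :=
  (hφ.2.2 a b z).symm

theorem eq_apply_of_apply_eq (hφ : IsFlowMap φ) {a b : ℝ} {x y : X} (h : φ a y = φ b x) :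
    y = φ (b - a) x := by
  rw [sub_eq_neg_add, ← hφ.apply_apply, ← h, hφ.apply_apply, neg_add_cancel, hφ.2.1]

theorem apply_neg_of_apply_eq (hφ : IsFlowMap φ) {p : ℝ} {z : X} (hp : φ p z = z) :
    φ (-p) z = z := by
  simpa using (hφ.eq_apply_of_apply_eq (hp.trans (hφ.2.1 z).symm)).symm

theorem apply_zsmul_of_apply_eq (hφ : IsFlowMap φ) {p : ℝ} {z : X} (hp : φ p z = z) (k : ℤ) :
    φ (k • p) z = z := by
  induction k using Int.induction_on with
  | zero => simpa using hφ.2.1 z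
  | succ i ih => rw [add_smul, one_smul, add_comm, ← hφ.apply_apply, ih, hp]
  | pred i ih => rw [sub_smul, one_smul, sub_eq_neg_add, ← hφ.apply_apply, ih,
      hφ.apply_neg_of_apply_eq hp]

theorem isClosed_singSet [T2Space X] (hφ : IsFlowMap φ) : IsClosed (SingSet φ) := by
  simp only [SingSet, ofPred_forall]
  exact isClosed_iInter fun t => isClosed_eq (hφ.1.comp (Continuous.prodMk_right t)) continuous_id

-- Every time `τ` is a limit of integer multiples of the periods `p n`.
theorem mem_singSet_of_tendsto [T2Space X] (hφ : IsFlowMap φ) {z : ℕ → X} {p : ℕ → ℝ} {a : X}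
    (hz : Tendsto z atTop (𝓝 a)) (hp : Tendsto p atTop (𝓝 0)) (hp_pos : ∀ n, 0 < p n)
    (hper : ∀ n, φ (p n) (z n) = z n) : a ∈ SingSet φ := by
  intro τ
  choose k hk using fun n => (existsUnique_sub_zsmul_mem_Ico (hp_pos n) τ 0).exists
  have hkτ : Tendsto (fun n => k n • p n) atTop (𝓝 τ) := by
    have : Tendsto (fun n => τ - k n • p n) atTop (𝓝 0) :=
      squeeze_zero (fun n => (hk n).1) (fun n => by simpa using (hk n).2.le) hp
    simpa using (tendsto_const_nhds (x := τ)).sub this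
  have hlim : Tendsto (fun n => φ (k n • p n) (z n)) atTop (𝓝 (φ τ a)) :=
    (hφ.1.tendsto (τ, a)).comp (hkτ.prodMk_nhds hz)
  simp only [hφ.apply_zsmul_of_apply_eq (hper _)] at hlim
  exact tendsto_nhds_unique hlim hz

end Topological

section Metric

variable [MetricSpace X] {K : Set X} {T e r : ℝ}

theorem exists_forall_apply_ne_of_isCompact (hφ : IsFlowMap φ) {K : Set X} (hK : IsCompact K)
    (hsing : Disjoint K (SingSet φ)) :
    ∃ e > 0, ∀ z ∈ K, ∀ t, |t| ∈ Ioc 0 e → φ t z ≠ z := by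
  by_contra! hcon
  choose z hzK t ht htz using fun n : ℕ => hcon (1 / (n + 1)) Nat.one_div_pos_of_nat
  obtain ⟨a, haK, ψ, hψ, hza⟩ := hK.tendsto_subseq hzK
  have hper : ∀ n, φ |t n| (z n) = z n := fun n => by
    rcases abs_choice (t n) with h | h <;> rw [h]
    exacts [htz n, hφ.apply_neg_of_apply_eq (htz n)]
  refine hsing.notMem_of_mem_left haK (hφ.mem_singSet_of_tendsto hza ?_ (fun n => (ht (ψ n)).1)
    fun n => hper (ψ n))
  exact squeeze_zero (fun n => abs_nonneg _) (fun n => (ht (ψ n)).2)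
    (tendsto_one_div_add_atTop_nhds_zero_nat.comp hψ.tendsto_atTop)

theorem distToSet_singSet_pos [BoundedSpace X] (hφ : IsFlowMap φ) {z : X} (hz : z ∉ SingSet φ) :
    0 < distToSet z (SingSet φ) := by
  unfold distToSet
  split_ifs with hS
  · obtain ⟨t, ht⟩ : ∃ t, φ t z ≠ z := by simpa [SingSet] using hz
    exact (dist_pos.2 ht).trans_le (dist_le_diam_of_mem BoundedSpace.bounded_univ trivial trivial)
  · exact (hφ.isClosed_singSet.notMem_iff_infDist_pos (nonempty_iff_ne_empty.2 hS)).1 hz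

theorem exists_forall_le_distToSet [BoundedSpace X] (hφ : IsFlowMap φ) {K : Set X}
    (hK : IsCompact K) (hsing : Disjoint K (SingSet φ)) :
    ∃ c > 0, ∀ z ∈ K, c ≤ distToSet z (SingSet φ) :=
  hK.exists_forall_le' (continuous_distToSet _).continuousOn fun _ hz =>
    hφ.distToSet_singSet_pos (hsing.notMem_of_mem_left hz)

theorem exists_dist_apply_self_le (hφ : IsFlowMap φ) {K : Set X} (hK : IsCompact K) {γ : ℝ}
    (hγ : 0 < γ) : ∃ d > 0, ∀ z ∈ K, ∀ ρ, |ρ| ≤ d → dist (φ ρ z) z ≤ γ := by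
  obtain ⟨d, hd, hφd⟩ := Metric.uniformContinuousOn_iff_le.1
    ((isCompact_Icc.prod hK).uniformContinuousOn_of_continuous (s := Icc (-1 : ℝ) 1 ×ˢ K)
      hφ.1.continuousOn) γ hγ
  refine ⟨min d 1, by positivity, fun z hz ρ hρ => ?_⟩
  have hρd : |ρ| ≤ d := hρ.trans (min_le_left _ _)
  simpa [hφ.2.1] using hφd (ρ, z) ⟨abs_le.1 (hρ.trans (min_le_right _ _)), hz⟩ (0, z)
    ⟨by norm_num, hz⟩ (by simpa [Prod.dist_eq, Real.dist_eq] using hρd)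

theorem exists_dist_apply_apply_le (hφ : IsFlowMap φ) {K : Set X} (hK : IsCompact K) (e : ℝ)
    {γ : ℝ} (hγ : 0 < γ) :
    ∃ d > 0, ∀ ρ, |ρ| ≤ e → ∀ a ∈ K, ∀ b ∈ K, dist a b ≤ d → dist (φ ρ a) (φ ρ b) ≤ γ := by
  obtain ⟨d, hd, hφd⟩ := Metric.uniformContinuousOn_iff_le.1
    ((isCompact_Icc.prod hK).uniformContinuousOn_of_continuous (s := Icc (-e) e ×ˢ K)
      hφ.1.continuousOn) γ hγ
  refine ⟨d, hd, fun ρ hρ a ha b hb hab => ?_⟩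
  exact hφd (ρ, a) ⟨abs_le.1 hρ, ha⟩ (ρ, b) ⟨abs_le.1 hρ, hb⟩
    (by simpa [Prod.dist_eq] using hab)

theorem exists_le_dist_apply_of_forall_apply_ne (hφ : IsFlowMap φ) {K : Set X} (hK : IsCompact K)
    {T e : ℝ} (hT : 0 < T) (hper : ∀ z ∈ K, ∀ t, |t| ∈ Ioc 0 e → φ t z ≠ z) :
    ∃ r > 0, ∀ z ∈ K, ∀ ρ, |ρ| ∈ Icc T e → r ≤ dist (φ ρ z) z := by
  have hband : ∀ ρ : ℝ, ρ ∈ Icc (-e) e \ Ioo (-T) T ↔ |ρ| ∈ Icc T e := fun ρ => by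
    rw [Set.mem_sdiff, mem_Icc, mem_Icc, ← abs_le, mem_Ioo, ← abs_lt, not_lt, and_comm]
  obtain ⟨r, hr, hrle⟩ := ((isCompact_Icc.diff isOpen_Ioo).prod hK).exists_forall_le'
    (hφ.1.dist continuous_snd).continuousOn (a := 0) fun p hp => dist_pos.2 <|
      hper p.2 hp.2 p.1 ⟨hT.trans_le ((hband _).1 hp.1).1, ((hband _).1 hp.1).2⟩
  exact ⟨r, hr, fun z hz ρ hρ => hrle (ρ, z) ⟨(hband ρ).2 hρ, hz⟩⟩

theorem dist_le_dist_add_of_abs_sub_le (hφ : IsFlowMap φ) {d γ : ℝ}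
    (hmove : ∀ z ∈ K, ∀ ρ, |ρ| ≤ d → dist (φ ρ z) z ≤ γ) {a b : ℝ} {y : X} (hy : φ a y ∈ K)
    (hab : |b - a| ≤ d) (w : X) : dist w (φ b y) ≤ dist w (φ a y) + γ := by
  have hb : φ b y = φ (b - a) (φ a y) := by rw [hφ.apply_apply, sub_add_cancel]
  calc dist w (φ b y) ≤ dist w (φ a y) + dist (φ a y) (φ b y) := dist_triangle _ _ _
    _ ≤ dist w (φ a y) + γ := by rw [hb, dist_comm (φ a y)]; gcongr; exact hmove _ hy _ hab

-- By `hsep`, the continuous function `a - b` never takes its absolute value in `[T, e]`.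
theorem abs_sub_lt_of_dist_lt (hφ : IsFlowMap φ) (hK : ∀ t, MapsTo (φ t) K K)
    (hsep : ∀ z ∈ K, ∀ ρ, |ρ| ∈ Icc T e → r ≤ dist (φ ρ z) z) (hTe : T < e) {z : X} (hz : z ∈ K)
    {I : Set ℝ} (hI : IsPreconnected I) {a b : ℝ → ℝ} (ha : ContinuousOn a I)
    (hb : ContinuousOn b I) (hdist : ∀ t ∈ I, dist (φ (a t) z) (φ (b t) z) < r) {t₁ t : ℝ}
    (ht₁ : t₁ ∈ I) (ht : t ∈ I) (h₁ : |a t₁ - b t₁| ≤ e) : |a t - b t| < T := by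
  have hgap : ∀ t ∈ I, |a t - b t| ∉ Icc T e := fun t ht hband => by
    have := hsep _ (hK (b t) hz) _ hband
    rw [hφ.apply_apply, sub_add_cancel] at this
    exact (hdist t ht).not_ge this
  refine hI.abs_lt_of_forall_abs_notMem_Icc (ha.sub hb) hTe hgap ht₁ ht ?_
  by_contra! hT
  exact hgap t₁ ht₁ ⟨hT, h₁⟩

theorem abs_reparam_sub_lt (hφ : IsFlowMap φ) (hK : ∀ t, MapsTo (φ t) K K)
    (hsep : ∀ z ∈ K, ∀ ρ, |ρ| ∈ Icc T e → r ≤ dist (φ ρ z) z) (hTe : T < e) {δ : ℝ}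
    (hequi : ∀ ρ, |ρ| ≤ e → ∀ a ∈ K, ∀ b ∈ K, dist a b ≤ δ → dist (φ ρ a) (φ ρ b) ≤ r / 2)
    (hδ : δ < r / 2) {x y : X} (hx : x ∈ K) (hy : y ∈ K) {s : ℝ → ℝ} (hs : Continuous s)
    (hshadow : ∀ t, dist (φ t x) (φ (s t) y) ≤ δ) (t : ℝ) {ρ : ℝ} (hρ : |ρ| ≤ e) :
    |s (t + ρ) - (s t + ρ)| < T := by
  refine hφ.abs_sub_lt_of_dist_lt hK hsep hTe hy isPreconnected_Icc (a := fun ρ => s (t + ρ))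
    (b := fun ρ => s t + ρ) (by fun_prop) (by fun_prop) (fun ρ hρ => ?_)
    (t₁ := 0) ⟨by linarith [abs_nonneg ρ], by linarith [abs_nonneg ρ]⟩ (abs_le.1 hρ)
    (by simpa using (abs_nonneg ρ).trans hρ)
  have hmove : dist (φ (t + ρ) x) (φ (s t + ρ) y) ≤ r / 2 := by
    rw [add_comm t, add_comm (s t), ← hφ.apply_apply, ← hφ.apply_apply]
    exact hequi ρ (abs_le.2 hρ) _ (hK t hx) _ (hK _ hy) (hshadow t)
  calc dist (φ (s (t + ρ)) y) (φ (s t + ρ) y)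
      ≤ dist (φ (s (t + ρ)) y) (φ (t + ρ) x) + dist (φ (t + ρ) x) (φ (s t + ρ) y) :=
        dist_triangle _ _ _
    _ ≤ δ + r / 2 := add_le_add (dist_comm (φ (t + ρ) x) _ ▸ hshadow _) hmove
    _ < r := by linarith

theorem exists_shadowing_reparam (hφ : IsFlowMap φ) (hKc : IsCompact K)
    (hK : ∀ t, MapsTo (φ t) K K) (hper : ∀ z ∈ K, ∀ t, |t| ∈ Ioc 0 e → φ t z ≠ z) (hT : 0 < T)
    (hTe : 2 * T < e) :
    ∃ δ > 0, ∀ x ∈ K, ∀ y ∈ K, ∀ s : ℝ → ℝ, Continuous s →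
      (∀ t, dist (φ t x) (φ (s t) y) ≤ δ) →
      (∃ q, IncreasingHomeo q ∧ ∀ u, |q u - s u| ≤ 3 * T) ∧
      ∀ σ, y = φ σ x → ∀ t₀, |s t₀ - (t₀ - σ)| ≤ e → ∀ t, |s t - (t - σ)| < T := by
  obtain ⟨r, hr, hsep⟩ := hφ.exists_le_dist_apply_of_forall_apply_ne hKc hT hper
  obtain ⟨δ, hδ, hequi⟩ := hφ.exists_dist_apply_apply_le hKc e (half_pos hr)
  refine ⟨min δ (r / 4), by positivity, fun x hx y hy s hs hshadow => ⟨?_, ?_⟩⟩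
  · have hslow := hφ.abs_reparam_sub_lt hK hsep (by linarith)
      (fun ρ hρ a ha b hb hab => hequi ρ hρ a ha b hb (hab.trans (min_le_left _ _)))
      (by linarith [min_le_right δ (r / 4)]) hx hy hs hshadow
    obtain ⟨q, hq, hqs⟩ := exists_increasingHomeo_abs_sub_le hs hT.le (by linarith : T < 2 * T)
      fun t ρ hρ => (hslow t (abs_le.2 ⟨by linarith [hρ.1], by linarith [hρ.2]⟩)).le
    exact ⟨q, hq, fun u => (hqs u).trans_eq (by ring)⟩
  · intro σ hσ t₀ ht₀ t
    refine hφ.abs_sub_lt_of_dist_lt hK hsep (by linarith) hy isPreconnected_univ (a := s)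
      (b := fun t => t - σ) hs.continuousOn (by fun_prop) (fun t _ => ?_) trivial trivial ht₀
    have hxt : φ (t - σ) y = φ t x := by rw [hσ, hφ.apply_apply, sub_add_cancel]
    rw [hxt, dist_comm]
    exact (hshadow t).trans_lt ((min_le_right _ _).trans_lt (by linarith))

end Metric

end IsFlowMap

theorem singular_expansive_expansive_on_nonsingular_compact_invariant
    [MetricSpace X] [CompactSpace X] (φ : ℝ → X → X) (hφ : IsFlowMap φ)
    (h : SingularExpansiveOn φ Set.univ) (Λ : Set X) (hcomp : IsCompact Λ)
    (hinv : ∀ t : ℝ, φ t '' Λ = Λ) (hns : Λ ∩ SingSet φ = ∅) :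
    ExpansiveOn φ Λ := by
  have hΛ : ∀ t, MapsTo (φ t) Λ Λ := fun t => mapsTo_iff_image_subset.2 (hinv t).subset
  have hsing : Disjoint Λ (SingSet φ) := disjoint_iff_inter_eq_empty.2 hns
  obtain ⟨e, he, hper⟩ := hφ.exists_forall_apply_ne_of_isCompact hcomp hsing
  obtain ⟨c, hc, hcΛ⟩ := hφ.exists_forall_le_distToSet hcomp hsing
  intro ε hε
  obtain ⟨δ₀, hδ₀, hSE⟩ := h (e / 2) (half_pos he)
  obtain ⟨d, hd, hmove⟩ := hφ.exists_dist_apply_self_le hcomp (half_pos (mul_pos hδ₀ hc))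
  obtain ⟨T, hT, hTε, hTe, hTd⟩ : ∃ T > 0, T ≤ ε ∧ T ≤ e / 8 ∧ 3 * T ≤ d :=
    ⟨min (min ε (e / 8)) (d / 3), by positivity, by grind, by grind, by grind⟩
  obtain ⟨δ, hδ, hreparam⟩ := hφ.exists_shadowing_reparam hcomp hΛ hper hT (by linarith)
  refine ⟨min δ (δ₀ * c / 2), by positivity, fun x hx y hy s hs hs0 hshadow => ?_⟩
  obtain ⟨⟨q, hq, hqs⟩, htime⟩ :=
    hreparam x hx y hy s hs fun t => (hshadow t).trans (min_le_left _ _)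
  obtain ⟨t₀, τ₀, hτ₀, hqτ₀⟩ := hSE x trivial y trivial q hq fun u => calc
      dist (φ u x) (φ (q u) y) ≤ dist (φ u x) (φ (s u) y) + δ₀ * c / 2 :=
        hφ.dist_le_dist_add_of_abs_sub_le hmove (hΛ _ hy) ((hqs u).trans hTd) _
      _ ≤ δ₀ * c := by linarith [(hshadow u).trans (min_le_right _ _)]
      _ ≤ δ₀ * distToSet (φ u x) (SingSet φ) := by gcongr; exact hcΛ _ (hΛ u hx)
  have hyx := hφ.eq_apply_of_apply_eq hqτ₀
  have hσ := htime _ hyx t₀ (abs_le.2 ⟨by linarith [(abs_le.1 (hqs t₀)).2, hτ₀.1],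
    by linarith [(abs_le.1 (hqs t₀)).1, hτ₀.2]⟩) 0
  rw [hs0, zero_sub, zero_sub, neg_neg] at hσ
  exact ⟨_, abs_le.1 (hσ.le.trans hTε), hyx⟩
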